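/- The assignment h ↦ w_h is a bijection from the set of Hessenberg functions h : [n] → [n] to the set of 312-avoiding permutations in S_n; the inverse sends a 312-avoiding permutation w to the Hessenberg function h(i) = max{w(1), …, w(i), i}. -/

import Mathlib

/-- A Hessenberg function on `Fin n`: `i ≤ h i` and `h` is weakly increasing. -/
def IsHessenberg {n : ℕ} (h : Fin n → Fin n) : Prop :=
  (∀ i, i ≤ h i) ∧ Monotone h

/-- Lexicographic order on one-line notations of permutations. -/
def LexLE {n : ℕ} (u v : Equiv.Perm (Fin n)) : Prop :=
  u = v ∨ ∃ i : Fin n, (∀ j, j < i → u j = v j) ∧ u i < v i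

/-- `w` is bounded by the Hessenberg function `h`: `w i ≤ h i` for all `i`. -/
def Bounded {n : ℕ} (h : Fin n → Fin n) (w : Equiv.Perm (Fin n)) : Prop :=
  ∀ i, w i ≤ h i

/-- `w` is the lexicographically maximal permutation with `w i ≤ h i` for all `i`. -/
def IsMaxFor {n : ℕ} (h : Fin n → Fin n) (w : Equiv.Perm (Fin n)) : Prop :=
  Bounded h w ∧ ∀ w', Bounded h w' → LexLE w' w

/-- The Coxeter length of a permutation: its number of inversions. -/
def lengthPerm {n : ℕ} (w : Equiv.Perm (Fin n)) : ℕ :=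
  (Finset.univ.filter fun p : Fin n × Fin n => p.1 < p.2 ∧ w p.2 < w p.1).card

/-- `w` avoids the pattern 312. -/
def Avoids312 {n : ℕ} (w : Equiv.Perm (Fin n)) : Prop :=
  ¬ ∃ i j k : Fin n, i < j ∧ j < k ∧ w j < w k ∧ w k < w i

/-- The Bruhat order on `S_n`, generated by `w < w * t` for transpositions `t`
with `ℓ(w) < ℓ(w * t)`. -/
def BruhatLE {n : ℕ} (u w : Equiv.Perm (Fin n)) : Prop :=
  Relation.ReflTransGen
    (fun x y => (∃ t : Equiv.Perm (Fin n), t.IsSwap ∧ y = x * t) ∧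
      lengthPerm x < lengthPerm y) u w

/-!
Lexicographic maximality of `w_h` is a greedy condition: each `w_h i` is the largest value
`≤ h i` not taken at an earlier position, for otherwise swapping it with the later position
holding a larger admissible value gives a larger bounded permutation (this uses that `h` is
monotone). A 312 pattern would violate greediness at its middle position. Greediness also
recovers `h` from `w_h` as `h i = max {w_h 0, …, w_h i}`, and conversely a 312-avoiding `w` is
greedy for this prefix-maximum function, hence equal to its lexicographically maximal
permutation.
-/

open Finset

variable {n : ℕ} {h : Fin n → Fin n} {w : Equiv.Perm (Fin n)}

theorem lexLE_iff_toLex_le {u v : Equiv.Perm (Fin n)} : LexLE u v ↔ toLex ⇑u ≤ toLex ⇑v := by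
  rw [le_iff_lt_or_eq, LexLE, toLex_inj, DFunLike.coe_fn_eq, or_comm]
  rfl

theorem exists_isMaxFor (hh : ∀ i, i ≤ h i) : ∃ w, IsMaxFor h w := by
  obtain ⟨w, hw, hmax⟩ := Set.exists_max_image {w : Equiv.Perm (Fin n) | Bounded h w}
    (fun w => toLex ⇑w) (Set.toFinite _) ⟨1, hh⟩
  exact ⟨w, hw, fun w' hw' => lexLE_iff_toLex_le.mpr (hmax w' hw')⟩

def IsGreedyFor (h : Fin n → Fin n) (w : Equiv.Perm (Fin n)) : Prop :=
  ∀ i v, v ≤ h i → (∀ j < i, w j ≠ v) → v ≤ w i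

theorem Equiv.Perm.lt_symm_apply {i v : Fin n} (hfresh : ∀ j < i, w j ≠ v) (hne : w i ≠ v) :
    i < w.symm v :=
  lt_of_le_of_ne (not_lt.mp fun hlt => hfresh _ hlt (w.apply_symm_apply v))
    fun heq => hne (by rw [heq, w.apply_symm_apply])

theorem IsGreedyFor.isMaxFor (hb : Bounded h w) (hg : IsGreedyFor h w) : IsMaxFor h w := by
  refine ⟨hb, fun w' hw' => lexLE_iff_toLex_le.mpr ?_⟩
  by_contra! hlt
  obtain ⟨i, hagree, hi⟩ := hlt
  refine (hg i (w' i) (hw' i) fun j hj hji => hj.ne ?_).not_gt hi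
  exact w'.injective ((hagree j hj).symm.trans hji)

/-- Exchanging a larger unused value into position `i` keeps `w` bounded, because `h` is
monotone, and makes it lexicographically larger. -/
theorem IsMaxFor.isGreedyFor (hmono : Monotone h) (hw : IsMaxFor h w) : IsGreedyFor h w := by
  intro i v hv hfresh
  by_contra! hlt
  set k := w.symm v
  have hk : w k = v := w.apply_symm_apply v
  have hik : i < k := w.lt_symm_apply hfresh hlt.ne
  let w' := w * Equiv.swap i k
  have hw' : Bounded h w' := by
    intro j
    rcases eq_or_ne j i with rfl | hji
    · simpa [w', hk] using hv
    rcases eq_or_ne j k with rfl | hjk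
    · simpa [w'] using hlt.le.trans (hv.trans (hmono hik.le))
    · simpa [w', Equiv.swap_apply_of_ne_of_ne hji hjk] using hw.1 j
  refine (lexLE_iff_toLex_le.mp (hw.2 w' hw')).not_gt ⟨i, fun j hj => ?_, ?_⟩
  · simp [w', Equiv.swap_apply_of_ne_of_ne hj.ne (hj.trans hik).ne]
  · simpa [w', hk] using hlt

theorem IsMaxFor.avoids312 (hmono : Monotone h) (hw : IsMaxFor h w) : Avoids312 w := by
  rintro ⟨i, j, k, hij, hjk, hjk', hki⟩
  have hfresh : ∀ l < j, w l ≠ w k := fun l hl hlk => (hl.trans hjk).ne (w.injective hlk)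
  exact (hw.isGreedyFor hmono j (w k) (hki.le.trans ((hw.1 i).trans (hmono hij.le)))
    hfresh).not_gt hjk'

def hessenbergOf (w : Equiv.Perm (Fin n)) (i : Fin n) : Fin n :=
  (Iic i).sup' nonempty_Iic w

theorem bounded_hessenbergOf (w : Equiv.Perm (Fin n)) : Bounded (hessenbergOf w) w :=
  fun _ => le_sup' w (mem_Iic.mpr le_rfl)

theorem Equiv.Perm.exists_le_apply (w : Equiv.Perm (Fin n)) (i : Fin n) : ∃ j ≤ i, i ≤ w j := by
  by_contra! hlt
  have hsub : (Iic i).image w ⊆ Iio i := by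
    intro v hv
    obtain ⟨j, hj, rfl⟩ := mem_image.mp hv
    exact mem_Iio.mpr (hlt j (mem_Iic.mp hj))
  have hcard := card_le_card hsub
  rw [card_image_of_injective _ w.injective, Fin.card_Iic, Fin.card_Iio] at hcard
  omega

theorem le_hessenbergOf (w : Equiv.Perm (Fin n)) (i : Fin n) : i ≤ hessenbergOf w i := by
  obtain ⟨j, hj, hij⟩ := w.exists_le_apply i
  exact (le_sup'_iff _).mpr ⟨j, mem_Iic.mpr hj, hij⟩

theorem isHessenberg_hessenbergOf (w : Equiv.Perm (Fin n)) : IsHessenberg (hessenbergOf w) :=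
  ⟨le_hessenbergOf w, fun _ _ hab => sup'_mono w (Iic_subset_Iic.mpr hab) nonempty_Iic⟩

theorem val_hessenbergOf (w : Equiv.Perm (Fin n)) (i : Fin n) :
    (hessenbergOf w i : ℕ) = max ((Iic i).sup fun j => (w j : ℕ)) (i : ℕ) := by
  have hval : (hessenbergOf w i : ℕ) = (Iic i).sup fun j => (w j : ℕ) := by
    rw [hessenbergOf, apply_sup'_eq_sup'_comp _ Fin.val fun _ _ => Fin.coe_max _ _, sup'_eq_sup]
    rfl
  rw [← hval, max_eq_left (Fin.le_def.mp (le_hessenbergOf w i))]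

theorem IsMaxFor.eq_hessenbergOf (hmono : Monotone h) (hw : IsMaxFor h w) :
    h = hessenbergOf w := by
  funext i
  refine le_antisymm ?_ (sup'_le _ _ fun j hj => (hw.1 j).trans (hmono (mem_Iic.mp hj)))
  by_cases htaken : ∃ j < i, w j = h i
  · obtain ⟨j, hj, hji⟩ := htaken
    exact hji ▸ le_sup' w (mem_Iic.mpr hj.le)
  · push Not at htaken
    exact (hw.isGreedyFor hmono i (h i) le_rfl htaken).trans (bounded_hessenbergOf w i)

/-- A larger unused value `w k ≤ w j` with `j < i < k` would form a 312 pattern. -/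
theorem isGreedyFor_hessenbergOf (hw : Avoids312 w) : IsGreedyFor (hessenbergOf w) w := by
  intro i v hv hfresh
  by_contra! hlt
  obtain ⟨j, hj, hvj⟩ := (le_sup'_iff _).mp hv
  have hk : w (w.symm v) = v := w.apply_symm_apply v
  have hji : j < i := lt_of_le_of_ne (mem_Iic.mp hj) (by rintro rfl; exact hvj.not_gt hlt)
  exact hw ⟨j, i, w.symm v, hji, w.lt_symm_apply hfresh hlt.ne, hk.symm ▸ hlt,
    hk.symm ▸ lt_of_le_of_ne hvj (hfresh j hji).symm⟩

/-- `h ↦ w_h` is a bijection from Hessenberg functions to 312-avoiding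
permutations, with inverse `w ↦ (i ↦ max {w 1, …, w i, i})`. -/
theorem stmt3 (n : ℕ) :
    (∀ h : Fin n → Fin n, IsHessenberg h → ∃ w, IsMaxFor h w ∧ Avoids312 w) ∧
    (∀ w : Equiv.Perm (Fin n), Avoids312 w →
      ∃! h : Fin n → Fin n, IsHessenberg h ∧ IsMaxFor h w) ∧
    (∀ (h : Fin n → Fin n) (w : Equiv.Perm (Fin n)), IsHessenberg h → IsMaxFor h w →
      ∀ i : Fin n, (h i : ℕ) = max (((Finset.Iic i).sup fun j => (w j : ℕ))) (i : ℕ)) := by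
  refine ⟨fun h hh => ?_, fun w hw => ?_, fun h w hh hw i => ?_⟩
  · obtain ⟨w, hmax⟩ := exists_isMaxFor hh.1
    exact ⟨w, hmax, hmax.avoids312 hh.2⟩
  · refine ⟨hessenbergOf w, ⟨isHessenberg_hessenbergOf w, ?_⟩, fun h ⟨hh, hmax⟩ => ?_⟩
    · exact (isGreedyFor_hessenbergOf hw).isMaxFor (bounded_hessenbergOf w)
    · exact hmax.eq_hessenbergOf hh.2
  · rw [hw.eq_hessenbergOf hh.2, val_hessenbergOf]
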